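/- The twelve 4×4 matrices B^id₁, B^id₂, B^sgn, B^ζ1, B^ζ2₁, B^ζ2₂, B^ξ₁, B^ξ₂, B^ξ₃, B^ξ₄, B^ξ₅, B^ξ₆ are linearly independent over ℂ and span 𝔏_GM; that is, they form a ℂ-basis of the 12-dimensional space of 4×4 complex matrices with zero column sums. -/

import Mathlib

open Matrix

noncomputable section

/-- The elementary rate matrix `L_ij`: entry 1 at `(i,j)`, entry −1 at `(j,j)`, 0 elsewhere. -/
def Lmat (i j : Fin 4) : Matrix (Fin 4) (Fin 4) ℂ :=
  Matrix.single i j 1 - Matrix.single j j 1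

/-- `𝔏_GM`: the 4×4 complex matrices each of whose columns sums to zero. -/
def LGMset : Set (Matrix (Fin 4) (Fin 4) ℂ) :=
  {Q | ∀ j, ∑ i, Q i j = 0}

/-- The permutation matrix `K_σ`, with entry 1 in position `(σ j, j)` for each `j`. -/
def Kmat (σ : Equiv.Perm (Fin 4)) : Matrix (Fin 4) (Fin 4) ℂ :=
  Matrix.of fun i j => if i = σ j then 1 else 0

/-- The permutation vector `P_σ := K_σ − I`. -/
def Pmat (σ : Equiv.Perm (Fin 4)) : Matrix (Fin 4) (Fin 4) ℂ :=
  Kmat σ - 1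

/-- The 4-cycle (1324) (on `{1,2,3,4}`, i.e. `0 ↦ 2 ↦ 1 ↦ 3 ↦ 0` on `Fin 4`). -/
def c1324 : Equiv.Perm (Fin 4) := Equiv.swap 0 3 * Equiv.swap 0 1 * Equiv.swap 0 2

/-- The 4-cycle (1423) (on `{1,2,3,4}`, i.e. `0 ↦ 3 ↦ 1 ↦ 2 ↦ 0` on `Fin 4`). -/
def c1423 : Equiv.Perm (Fin 4) := Equiv.swap 0 2 * Equiv.swap 0 1 * Equiv.swap 0 3

/-- The group 𝒢 = {e, (12), (34), (12)(34), (13)(24), (14)(23), (1324), (1423)},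
presented as a list of its eight elements. -/
def Glist : List (Equiv.Perm (Fin 4)) :=
  [1, Equiv.swap 0 1, Equiv.swap 2 3, Equiv.swap 0 1 * Equiv.swap 2 3,
   Equiv.swap 0 2 * Equiv.swap 1 3, Equiv.swap 0 3 * Equiv.swap 1 2, c1324, c1423]

/-- `𝔏_GM` as a complex submodule of the 4×4 matrices. -/
def LGMsub : Submodule ℂ (Matrix (Fin 4) (Fin 4) ℂ) where
  carrier := LGMset
  add_mem' := by
    intro a b ha hb
    intro j
    simp only [Matrix.add_apply, Finset.sum_add_distrib, ha j, hb j, add_zero]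
  zero_mem' := by intro j; simp
  smul_mem' := by
    intro c a ha
    intro j
    simp only [Matrix.smul_apply, smul_eq_mul, ← Finset.mul_sum, ha j, mul_zero]

/-- Row-sum vectors `R_i = ∑_{j ≠ i} L_ij`. -/
def Rvec (i : Fin 4) : Matrix (Fin 4) (Fin 4) ℂ :=
  ∑ j ∈ Finset.univ.filter (· ≠ i), Lmat i j

/-- The cherry vector `Q₁₂ = L₁₃ + L₁₄ + L₂₃ + L₂₄` (1-based indices). -/
def Qc12 : Matrix (Fin 4) (Fin 4) ℂ := Lmat 0 2 + Lmat 0 3 + Lmat 1 2 + Lmat 1 3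

/-- The cherry vector `Q₃₄ = L₃₁ + L₃₂ + L₄₁ + L₄₂` (1-based indices). -/
def Qc34 : Matrix (Fin 4) (Fin 4) ℂ := Lmat 2 0 + Lmat 2 1 + Lmat 3 0 + Lmat 3 1

/-- Twisted vectors `H_i = L_ik + L_il + L_ji` (1-based: H₁ = L₁₃+L₁₄+L₂₁, etc.). -/
def Hvec : Fin 4 → Matrix (Fin 4) (Fin 4) ℂ
  | 0 => Lmat 0 2 + Lmat 0 3 + Lmat 1 0
  | 1 => Lmat 1 2 + Lmat 1 3 + Lmat 0 1
  | 2 => Lmat 2 0 + Lmat 2 1 + Lmat 3 2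
  | 3 => Lmat 3 0 + Lmat 3 1 + Lmat 2 3

/-- Twisted vectors `V_i = L_ki + L_li + L_ij` (1-based: V₁ = L₃₁+L₄₁+L₁₂, etc.). -/
def Vvec : Fin 4 → Matrix (Fin 4) (Fin 4) ℂ
  | 0 => Lmat 2 0 + Lmat 3 0 + Lmat 0 1
  | 1 => Lmat 2 1 + Lmat 3 1 + Lmat 1 0
  | 2 => Lmat 0 2 + Lmat 1 2 + Lmat 2 3
  | 3 => Lmat 0 3 + Lmat 1 3 + Lmat 3 2

def Bid1 : Matrix (Fin 4) (Fin 4) ℂ := Pmat (Equiv.swap 0 1 * Equiv.swap 2 3)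
def Bid2 : Matrix (Fin 4) (Fin 4) ℂ :=
  Pmat (Equiv.swap 0 2 * Equiv.swap 1 3) + Pmat (Equiv.swap 0 3 * Equiv.swap 1 2)
def Bsgn : Matrix (Fin 4) (Fin 4) ℂ :=
  Pmat (Equiv.swap 0 2 * Equiv.swap 1 3) - Pmat (Equiv.swap 0 3 * Equiv.swap 1 2)
def Bzeta1 : Matrix (Fin 4) (Fin 4) ℂ := Pmat c1324 - Pmat c1423
def Bzeta2_1 : Matrix (Fin 4) (Fin 4) ℂ := Pmat (Equiv.swap 0 1) - Pmat (Equiv.swap 2 3)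
def Bzeta2_2 : Matrix (Fin 4) (Fin 4) ℂ := Qc12 - Qc34
def Bxi1 : Matrix (Fin 4) (Fin 4) ℂ := Rvec 0 - Rvec 1
def Bxi2 : Matrix (Fin 4) (Fin 4) ℂ := Rvec 2 - Rvec 3
def Bxi3 : Matrix (Fin 4) (Fin 4) ℂ := Hvec 0 - Hvec 1
def Bxi4 : Matrix (Fin 4) (Fin 4) ℂ := Hvec 2 - Hvec 3
def Bxi5 : Matrix (Fin 4) (Fin 4) ℂ := Vvec 0 - Vvec 1
def Bxi6 : Matrix (Fin 4) (Fin 4) ℂ := Vvec 2 - Vvec 3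

/-!
Each of the twelve matrices is a sum or difference of elementary rate matrices `L_ij` and
permutation vectors `P_σ = K_σ - 1`, all of which have zero column sums; so they lie in `𝔏_GM`,
the kernel of the surjective column-sum map, which has dimension `16 - 4 = 12`. It remains to show
linear independence. A relation `∑ c_k B_k = 0` gives one linear equation in the `c_k` for each of
the twelve off-diagonal positions, and adding and subtracting these equations in suitable groups
isolates every `c_k`.
-/

namespace Matrix

variable {R : Type*} [CommSemiring R] {m n : Type*} [Fintype m]

def colSumLinearMap : Matrix m n R →ₗ[R] n → R where
  toFun Q j := ∑ i, Q i j
  map_add' _ _ := by ext; simp [Finset.sum_add_distrib]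
  map_smul' _ _ := by ext; simp [Finset.mul_sum]

@[simp]
theorem colSumLinearMap_apply (Q : Matrix m n R) (j : n) : colSumLinearMap Q j = ∑ i, Q i j :=
  rfl

theorem colSumLinearMap_diagonal [DecidableEq m] (v : m → R) :
    colSumLinearMap (diagonal v) = v := by
  ext j
  simp [diagonal_apply]

theorem finrank_ker_colSumLinearMap {K : Type*} [Field K] [DecidableEq m] :
    Module.finrank K (LinearMap.ker (colSumLinearMap : Matrix m m K →ₗ[K] m → K)) =
      Fintype.card m * Fintype.card m - Fintype.card m := by
  have h :=
    LinearMap.finrank_range_add_finrank_ker (colSumLinearMap : Matrix m m K →ₗ[K] m → K)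
  rw [LinearMap.range_eq_top.2 fun v => ⟨diagonal v, colSumLinearMap_diagonal v⟩,
    finrank_top] at h
  simp only [Module.finrank_matrix, Module.finrank_fintype_fun_eq_card, Module.finrank_self,
    mul_one] at h
  omega

end Matrix

theorem LGMsub_eq_ker_colSumLinearMap : LGMsub = LinearMap.ker colSumLinearMap :=
  Submodule.ext fun _ => funext_iff.symm

theorem finrank_LGMsub : Module.finrank ℂ LGMsub = 12 := by
  rw [LGMsub_eq_ker_colSumLinearMap, finrank_ker_colSumLinearMap, Fintype.card_fin]

theorem Lmat_mem (i j : Fin 4) : Lmat i j ∈ LGMsub := by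
  intro b
  simp [Lmat, Matrix.single_apply, Finset.sum_sub_distrib, ite_and]

theorem Pmat_mem (σ : Equiv.Perm (Fin 4)) : Pmat σ ∈ LGMsub := by
  intro b
  simp [Pmat, Kmat, Matrix.one_apply, Finset.sum_sub_distrib]

theorem Rvec_mem (i : Fin 4) : Rvec i ∈ LGMsub :=
  Submodule.sum_mem _ fun j _ => Lmat_mem i j

theorem Qc12_mem : Qc12 ∈ LGMsub :=
  add_mem (add_mem (add_mem (Lmat_mem 0 2) (Lmat_mem 0 3)) (Lmat_mem 1 2)) (Lmat_mem 1 3)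

theorem Qc34_mem : Qc34 ∈ LGMsub :=
  add_mem (add_mem (add_mem (Lmat_mem 2 0) (Lmat_mem 2 1)) (Lmat_mem 3 0)) (Lmat_mem 3 1)

theorem Hvec_mem (i : Fin 4) : Hvec i ∈ LGMsub := by
  fin_cases i <;> exact add_mem (add_mem (Lmat_mem _ _) (Lmat_mem _ _)) (Lmat_mem _ _)

theorem Vvec_mem (i : Fin 4) : Vvec i ∈ LGMsub := by
  fin_cases i <;> exact add_mem (add_mem (Lmat_mem _ _) (Lmat_mem _ _)) (Lmat_mem _ _)

theorem range_twelve_matrices_subset_LGMsub :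
    Set.range
        ![Bid1, Bid2, Bsgn, Bzeta1, Bzeta2_1, Bzeta2_2, Bxi1, Bxi2, Bxi3, Bxi4, Bxi5, Bxi6] ⊆
      LGMsub := by
  rintro _ ⟨k, rfl⟩
  fin_cases k
  · exact Pmat_mem _
  · exact add_mem (Pmat_mem _) (Pmat_mem _)
  · exact sub_mem (Pmat_mem _) (Pmat_mem _)
  · exact sub_mem (Pmat_mem _) (Pmat_mem _)
  · exact sub_mem (Pmat_mem _) (Pmat_mem _)
  · exact sub_mem Qc12_mem Qc34_mem
  · exact sub_mem (Rvec_mem 0) (Rvec_mem 1)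
  · exact sub_mem (Rvec_mem 2) (Rvec_mem 3)
  · exact sub_mem (Hvec_mem 0) (Hvec_mem 1)
  · exact sub_mem (Hvec_mem 2) (Hvec_mem 3)
  · exact sub_mem (Vvec_mem 0) (Vvec_mem 1)
  · exact sub_mem (Vvec_mem 2) (Vvec_mem 3)

theorem Lmat_apply (i j a b : Fin 4) :
    Lmat i j a b = (if a = i ∧ b = j then 1 else 0) - (if a = j ∧ b = j then 1 else 0) := by
  simp [Lmat, Matrix.single_apply, eq_comm]

theorem Pmat_apply (σ : Equiv.Perm (Fin 4)) (a b : Fin 4) :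
    Pmat σ a b = (if a = σ b then 1 else 0) - (if a = b then 1 else 0) := by
  simp [Pmat, Kmat, Matrix.one_apply]

theorem Bid1_eq : Bid1 = !![-1, 1, 0, 0; 1, -1, 0, 0; 0, 0, -1, 1; 0, 0, 1, -1] := by
  ext a b
  fin_cases a <;> fin_cases b <;> simp [Bid1, Pmat_apply, Equiv.swap_apply_def]

theorem Bid2_eq : Bid2 = !![-2, 0, 1, 1; 0, -2, 1, 1; 1, 1, -2, 0; 1, 1, 0, -2] := by
  ext a b
  fin_cases a <;> fin_cases b <;> simp [Bid2, Pmat_apply, Equiv.swap_apply_def] <;> norm_num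

theorem Bsgn_eq : Bsgn = !![0, 0, 1, -1; 0, 0, -1, 1; 1, -1, 0, 0; -1, 1, 0, 0] := by
  ext a b
  fin_cases a <;> fin_cases b <;> simp [Bsgn, Pmat_apply, Equiv.swap_apply_def]

theorem Bzeta1_eq : Bzeta1 = !![0, 0, -1, 1; 0, 0, 1, -1; 1, -1, 0, 0; -1, 1, 0, 0] := by
  ext a b
  fin_cases a <;> fin_cases b <;> simp [Bzeta1, Pmat_apply, c1324, c1423, Equiv.swap_apply_def]

theorem Bzeta2_1_eq : Bzeta2_1 = !![-1, 1, 0, 0; 1, -1, 0, 0; 0, 0, 1, -1; 0, 0, -1, 1] := by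
  ext a b
  fin_cases a <;> fin_cases b <;> simp [Bzeta2_1, Pmat_apply, Equiv.swap_apply_def]

theorem Bzeta2_2_eq :
    Bzeta2_2 = !![2, 0, 1, 1; 0, 2, 1, 1; -1, -1, -2, 0; -1, -1, 0, -2] := by
  ext a b
  fin_cases a <;> fin_cases b <;> simp [Bzeta2_2, Qc12, Qc34, Lmat_apply] <;> norm_num

theorem Bxi1_eq : Bxi1 = !![1, 1, 1, 1; -1, -1, -1, -1; 0, 0, 0, 0; 0, 0, 0, 0] := by
  ext a b
  fin_cases a <;> fin_cases b <;>
    simp [Bxi1, Rvec, Lmat_apply, Finset.sum_filter, Fin.sum_univ_four]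

theorem Bxi2_eq : Bxi2 = !![0, 0, 0, 0; 0, 0, 0, 0; 1, 1, 1, 1; -1, -1, -1, -1] := by
  ext a b
  fin_cases a <;> fin_cases b <;>
    simp [Bxi2, Rvec, Lmat_apply, Finset.sum_filter, Fin.sum_univ_four]

theorem Bxi3_eq : Bxi3 = !![-1, -1, 1, 1; 1, 1, -1, -1; 0, 0, 0, 0; 0, 0, 0, 0] := by
  ext a b
  fin_cases a <;> fin_cases b <;> simp [Bxi3, Hvec, Lmat_apply]

theorem Bxi4_eq : Bxi4 = !![0, 0, 0, 0; 0, 0, 0, 0; 1, 1, -1, -1; -1, -1, 1, 1] := by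
  ext a b
  fin_cases a <;> fin_cases b <;> simp [Bxi4, Hvec, Lmat_apply]

theorem Bxi5_eq : Bxi5 = !![-1, 1, 0, 0; -1, 1, 0, 0; 1, -1, 0, 0; 1, -1, 0, 0] := by
  ext a b
  fin_cases a <;> fin_cases b <;> simp [Bxi5, Vvec, Lmat_apply]

theorem Bxi6_eq : Bxi6 = !![0, 0, 1, -1; 0, 0, 1, -1; 0, 0, -1, 1; 0, 0, -1, 1] := by
  ext a b
  fin_cases a <;> fin_cases b <;> simp [Bxi6, Vvec, Lmat_apply]

theorem linearIndependent_twelve_matrices :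
    LinearIndependent ℂ
      ![Bid1, Bid2, Bsgn, Bzeta1, Bzeta2_1, Bzeta2_2, Bxi1, Bxi2, Bxi3, Bxi4, Bxi5, Bxi6] := by
  rw [Bid1_eq, Bid2_eq, Bsgn_eq, Bzeta1_eq, Bzeta2_1_eq, Bzeta2_2_eq, Bxi1_eq, Bxi2_eq, Bxi3_eq,
    Bxi4_eq, Bxi5_eq, Bxi6_eq, Fintype.linearIndependent_iff]
  intro c hc
  have e01 := congrFun₂ hc 0 1
  have e10 := congrFun₂ hc 1 0
  have e23 := congrFun₂ hc 2 3
  have e32 := congrFun₂ hc 3 2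
  have e02 := congrFun₂ hc 0 2
  have e03 := congrFun₂ hc 0 3
  have e12 := congrFun₂ hc 1 2
  have e13 := congrFun₂ hc 1 3
  have e20 := congrFun₂ hc 2 0
  have e21 := congrFun₂ hc 2 1
  have e30 := congrFun₂ hc 3 0
  have e31 := congrFun₂ hc 3 1
  simp [Fin.sum_univ_succ] at e01 e10 e23 e32 e02 e03 e12 e13 e20 e21 e30 e31
  have h0 : c 0 = 0 := by linear_combination (e01 + e10 + e23 + e32) / 4
  have h4 : c 4 = 0 := by linear_combination (e01 + e10 - e23 - e32) / 4
  have h1 : c 1 = 0 := by linear_combination (e02 + e03 + e12 + e13 + e20 + e21 + e30 + e31) / 8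
  have h5 : c 5 = 0 := by linear_combination (e02 + e03 + e12 + e13 - e20 - e21 - e30 - e31) / 8
  have h2 : c 2 = 0 := by linear_combination (e02 - e03 - e12 + e13 + e20 - e21 - e30 + e31) / 8
  have h3 : c 3 = 0 := by linear_combination (-e02 + e03 + e12 - e13 + e20 - e21 - e30 + e31) / 8
  have h10 : c 10 = 0 := by linear_combination (e20 - e21 + e30 - e31) / 4
  have h11 : c 11 = 0 := by linear_combination (e02 - e03 + e12 - e13) / 4
  have h6 : c 6 = 0 := by linear_combination (e02 + e03 - e12 - e13) / 8 + (e01 - e10) / 4 - h10 / 2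
  have h8 : c 8 = 0 := by linear_combination (e02 + e03 - e12 - e13) / 8 - (e01 - e10) / 4 + h10 / 2
  have h7 : c 7 = 0 := by linear_combination (e20 + e21 - e30 - e31) / 8 + (e23 - e32) / 4 - h11 / 2
  have h9 : c 9 = 0 := by linear_combination (e20 + e21 - e30 - e31) / 8 - (e23 - e32) / 4 + h11 / 2
  intro k
  fin_cases k <;> assumption

theorem twelve_matrices_form_basis :
    LinearIndependent ℂ
      ![Bid1, Bid2, Bsgn, Bzeta1, Bzeta2_1, Bzeta2_2, Bxi1, Bxi2, Bxi3, Bxi4, Bxi5, Bxi6] ∧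
    Submodule.span ℂ
      (Set.range
        ![Bid1, Bid2, Bsgn, Bzeta1, Bzeta2_1, Bzeta2_2, Bxi1, Bxi2, Bxi3, Bxi4, Bxi5, Bxi6]) =
      LGMsub := by
  refine ⟨linearIndependent_twelve_matrices, Submodule.eq_of_le_of_finrank_eq
    (Submodule.span_le.2 range_twelve_matrices_subset_LGMsub) ?_⟩
  rw [finrank_span_eq_card linearIndependent_twelve_matrices, finrank_LGMsub, Fintype.card_fin]
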